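/- The exchange graph of Farey triples is a 3-regular tree. In particular, for every Farey triple q̄ and every natural number n, the number of Farey triples obtainable from q̄ by a sequence of at most n mutations equals 3·2^n − 2. -/

import Mathlib

/-- `ℚ∞ = ℚ ∪ {∞}`, ordered with `∞ = ⊤` as the greatest element. -/
abbrev QInf : Type := WithTop ℚ

/-- The numerator `d(q)` of the reduced representation `q = d(q)/r(q)`; `d(∞) = 1`. -/
def fnum : QInf → ℤ := WithTop.recTopCoe 1 (fun q => q.num)

/-- The denominator `r(q)` of the reduced representation `q = d(q)/r(q)`; `r(∞) = 0`. -/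
def fden : QInf → ℤ := WithTop.recTopCoe 0 (fun q => (q.den : ℤ))

/-- The element of `ℚ∞` represented by the fraction `a / b`: it is `∞` if `b = 0`,
and otherwise the rational number `a / b` (normalized so that the denominator is
positive and the fraction is in lowest terms). -/
def fmk (a b : ℤ) : QInf := if b = 0 then (⊤ : QInf) else (((a : ℚ) / (b : ℚ)) : ℚ)

/-- The Farey distance `Δ(p,q) = |d(p)r(q) - d(q)r(p)|`. -/
def fdist (p q : QInf) : ℤ := |fnum p * fden q - fnum q * fden p|

/-- `p` and `q` are Farey neighbours if `Δ(p,q) = 1`. -/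
def FareyNbr (p q : QInf) : Prop := fdist p q = 1

/-- The Farey sum `p ⊕ q = (d(p) + d(q)) / (r(p) + r(q))`. -/
def fsum (p q : QInf) : QInf := fmk (fnum p + fnum q) (fden p + fden q)

/-- The Farey difference `p ⊖ q = (d(p) - d(q)) / (r(p) - r(q))`. -/
def fdiff (p q : QInf) : QInf := fmk (fnum p - fnum q) (fden p - fden q)

/-- A Farey triple: a three-element subset of `ℚ∞` whose elements are pairwise
Farey neighbours. -/
def IsFareyTriple (s : Set QInf) : Prop := s.ncard = 3 ∧ s.Pairwise FareyNbr

/-- The element replacing `p` in the mutation of the Farey triple `{p, q, r}` in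
direction `p`: it is `q ⊖ r` if `p` lies strictly between `q` and `r`, and `q ⊕ r`
otherwise. -/
def fareyMutEl (p q r : QInf) : QInf :=
  if (q < p ∧ p < r) ∨ (r < p ∧ p < q) then fdiff q r else fsum q r

/-- The mutation of the Farey triple `{p, q, r}` in direction `p`. -/
def fareyMut (p q r : QInf) : Set QInf := {fareyMutEl p q r, q, r}

/-- The complexity `c(q) = |d(q)| + r(q) + |d(q) - r(q)|`. -/
def complexity (x : QInf) : ℤ := |fnum x| + fden x + |fnum x - fden x|

/-- `t` is obtained from `s` by a single mutation of Farey triples. -/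
def IsMutationOf (s t : Set QInf) : Prop :=
  ∃ a b c : QInf, a ≠ b ∧ a ≠ c ∧ b ≠ c ∧ s = {a, b, c} ∧ t = fareyMut a b c

/-- The exchange graph of Farey triples: vertices are the Farey triples, with an
edge between two Farey triples whenever one is obtained from the other by a single
mutation. -/
def fareyExchangeGraph : SimpleGraph {s : Set QInf // IsFareyTriple s} where
  Adj s t := s ≠ t ∧ (IsMutationOf s.val t.val ∨ IsMutationOf t.val s.val)
  symm := by
    constructor
    rintro s t ⟨hne, h⟩
    exact ⟨hne.symm, h.symm⟩
  loopless := by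
    constructor
    rintro s ⟨hne, -⟩
    exact hne rfl

/-!
Every Farey triple is `{a/b, (a+c)/(b+d), c/d}` for integers with `b > 0`, `d ≥ 0` and
`c b - a d = 1`, and its three mutations are again of this form. Weigh a point `p/q` by the
Eisenstein norm `p² - p q + q²`. The weights `u, v, w` of the points of a Farey triple satisfy
`u² + v² + w² - 2 (u v + v w + w u) = -3`, and the mutation that removes the point of weight `u`
brings in a point of weight `2 (v + w) - u`: it is a Vieta jump. So the total weight can fail to
increase under at most one of the three mutations (two would need `u ≥ v + w` and `v ≥ u + w`),
and if none of the three decreases it, the equation forces `u = v = w = 1`, i.e. the triple is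
`{0, 1, ∞}`. Descending the total weight connects every triple to `{0, 1, ∞}`; on a cycle, the
vertex of largest weight would have two neighbours of no larger weight, so the graph is a tree.
In a tree whose vertices all have degree `3`, the sphere of radius `n + 1` has `3 * 2 ^ n`
vertices.
-/

namespace SimpleGraph

variable {V : Type*} {G : SimpleGraph V}

theorem isAcyclic_of_adj_le_unique {α : Type*} [LinearOrder α] (f : V → α)
    (h : ∀ ⦃u w₁ w₂⦄, G.Adj u w₁ → G.Adj u w₂ → f w₁ ≤ f u → f w₂ ≤ f u → w₁ = w₂) :
    G.IsAcyclic := by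
  classical
  intro v c hc
  obtain ⟨u, hu, hmax⟩ := c.support.toFinset.exists_max_image f ⟨v, by simp⟩
  rw [List.mem_toFinset] at hu
  have hc' := hc.rotate hu
  have hnil : ¬ (c.rotate u hu).Nil := hc'.not_nil
  have hle : ∀ x ∈ (c.rotate u hu).support, f x ≤ f u := fun x hx =>
    hmax x (List.mem_toFinset.mpr ((c.mem_support_rotate_iff u hu).mp hx))
  exact hc'.snd_ne_penultimate <| h ((c.rotate u hu).adj_snd hnil)
    ((c.rotate u hu).adj_penultimate hnil).symm (hle _ (Walk.getVert_mem_support _ _))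
    (hle _ (Walk.getVert_mem_support _ _))

theorem connected_of_exists_adj_lt {α : Type*} [Preorder α] [WellFoundedLT α] (f : V → α)
    (r : V) (h : ∀ v, v ≠ r → ∃ w, G.Adj v w ∧ f w < f v) : G.Connected := by
  refine (connected_iff_exists_forall_reachable G).mpr ⟨r, fun v => ?_⟩
  induction v using (InvImage.wf f wellFounded_lt).induction with
  | h v ih =>
    by_cases hv : v = r
    · exact hv ▸ Reachable.refl v
    · obtain ⟨w, hvw, hlt⟩ := h v hv
      exact (ih w hlt).trans hvw.symm.reachable

lemma Connected.setOf_dist_eq_zero (hG : G.Connected) (v : V) : {w | G.dist v w = 0} = {v} := by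
  ext w
  simp [hG.dist_eq_zero_iff, eq_comm]

lemma Connected.exists_walk_length_le_iff (hG : G.Connected) {v w : V} {n : ℕ} :
    (∃ p : G.Walk v w, p.length ≤ n) ↔ G.dist v w ≤ n := by
  refine ⟨fun ⟨p, hp⟩ => (dist_le p).trans hp, fun h => ?_⟩
  obtain ⟨p, hp⟩ := hG.exists_walk_length_eq_dist v w
  exact ⟨p, hp ▸ h⟩

lemma exists_adj_dist_eq_of_dist_eq_add_one {v w : V} {n : ℕ} (h : G.dist v w = n + 1) :
    ∃ u, G.Adj u w ∧ G.dist v u = n := by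
  obtain ⟨p, hp⟩ := exists_walk_of_dist_ne_zero (h.trans_ne n.succ_ne_zero)
  have hnil : ¬ p.Nil := by rw [← Walk.length_eq_zero_iff]; omega
  have hadj := p.adj_penultimate hnil
  refine ⟨p.penultimate, hadj, le_antisymm ?_ ?_⟩
  · have := dist_le p.dropLast
    rw [Walk.length_dropLast] at this
    omega
  · have := hadj.reachable.dist_triangle_right v
    rw [dist_eq_one_iff_adj.mpr hadj] at this
    omega

lemma IsAcyclic.eq_of_adj_of_dist_eq (hG : G.IsAcyclic) {v w u₁ u₂ : V} {n : ℕ}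
    (h₁ : G.Adj u₁ w) (h₂ : G.Adj u₂ w) (hd₁ : G.dist v u₁ = n) (hd₂ : G.dist v u₂ = n)
    (hw : G.dist v w = n + 1) : u₁ = u₂ := by
  have hreach : G.Reachable v w := Reachable.of_dist_ne_zero (by omega)
  have geodesic : ∀ u, G.Adj u w → G.dist v u = n →
      ∃ q : G.Walk v w, q.IsPath ∧ q.penultimate = u := fun u hu hdu => by
    obtain ⟨p, hp⟩ := (hreach.trans hu.symm.reachable).exists_walk_length_eq_dist
    refine ⟨p.concat hu, (p.concat hu).isPath_of_length_eq_dist ?_, p.penultimate_concat hu⟩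
    rw [Walk.length_concat, hp, hdu, hw]
  obtain ⟨q₁, hq₁, rfl⟩ := geodesic u₁ h₁ hd₁
  obtain ⟨q₂, hq₂, rfl⟩ := geodesic u₂ h₂ hd₂
  exact congrArg (·.1.penultimate) ((hG.subsingleton_path v w).elim ⟨q₁, hq₁⟩ ⟨q₂, hq₂⟩)

def childSet (G : SimpleGraph V) (v u : V) : Set V :=
  {w | G.Adj u w ∧ G.dist v w = G.dist v u + 1}

lemma setOf_dist_eq_add_one (v : V) (n : ℕ) :
    {w | G.dist v w = n + 1} = ⋃ u ∈ {u | G.dist v u = n}, G.childSet v u := by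
  ext w
  simp only [Set.mem_ofPred_eq, Set.mem_iUnion, childSet, exists_prop]
  constructor
  · intro hw
    obtain ⟨u, hu, hdu⟩ := exists_adj_dist_eq_of_dist_eq_add_one hw
    exact ⟨u, hdu, hu, by rw [hw, hdu]⟩
  · rintro ⟨u, hdu, -, hw⟩
    rw [hw, hdu]

lemma IsAcyclic.pairwise_disjoint_childSet (hG : G.IsAcyclic) (v : V) :
    Pairwise (Function.onFun Disjoint (G.childSet v)) := fun u₁ u₂ hne =>
  Set.disjoint_left.mpr fun w hw₁ hw₂ => hne <|
    hG.eq_of_adj_of_dist_eq hw₁.1 hw₂.1 rfl (by have := hw₁.2; have := hw₂.2; omega) hw₁.2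

lemma IsTree.exists_neighborSet_eq_insert_childSet (hG : G.IsTree) {v u : V} (hu : u ≠ v) :
    ∃ p ∉ G.childSet v u, G.neighborSet u = insert p (G.childSet v u) := by
  obtain ⟨n, hn⟩ := Nat.exists_eq_add_one_of_ne_zero (hG.connected.pos_dist_of_ne hu.symm).ne'
  obtain ⟨p, hpu, hdp⟩ := exists_adj_dist_eq_of_dist_eq_add_one hn
  refine ⟨p, fun hp => by have := hp.2; omega, Set.ext fun w => ⟨fun huw => ?_, ?_⟩⟩
  · rcases hG.dist_eq_dist_add_one_of_adj v huw with h | h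
    · exact Or.inl (hG.isAcyclic.eq_of_adj_of_dist_eq huw.symm hpu (by omega) hdp hn)
    · exact Or.inr ⟨huw, h⟩
  · rintro (rfl | hw)
    exacts [hpu.symm, hw.1]

section RegularTree

variable {d : ℕ} (hdeg : ∀ u, (G.neighborSet u).ncard = d + 1)
include hdeg

lemma finite_childSet (v u : V) : (G.childSet v u).Finite :=
  (Set.finite_of_ncard_ne_zero (s := G.neighborSet u) (by simp [hdeg])).subset fun _ hw => hw.1

variable (hG : G.IsTree)
include hG

lemma IsTree.ncard_childSet {v u : V} (hu : u ≠ v) : (G.childSet v u).ncard = d := by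
  obtain ⟨p, hp, hN⟩ := hG.exists_neighborSet_eq_insert_childSet hu
  have := hdeg u
  rw [hN, Set.ncard_insert_of_notMem hp (finite_childSet hdeg v u)] at this
  omega

lemma IsTree.finite_setOf_dist_eq (v : V) (n : ℕ) : {w | G.dist v w = n}.Finite := by
  induction n with
  | zero => rw [hG.connected.setOf_dist_eq_zero]; exact Set.finite_singleton v
  | succ n ih =>
    rw [setOf_dist_eq_add_one]
    exact ih.biUnion fun u _ => finite_childSet hdeg v u

lemma IsTree.ncard_setOf_dist_eq_add_one (v : V) (n : ℕ) :
    {w | G.dist v w = n + 1}.ncard = (d + 1) * d ^ n := by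
  induction n with
  | zero =>
    have hS : {w | G.dist v w = 0 + 1} = G.neighborSet v := by ext; simp
    rw [hS, hdeg, pow_zero, mul_one]
  | succ n ih =>
    rw [setOf_dist_eq_add_one, (hG.finite_setOf_dist_eq hdeg v (n + 1)).ncard_biUnion
      (fun u _ => finite_childSet hdeg v u)
      ((hG.isAcyclic.pairwise_disjoint_childSet v).set_pairwise _)]
    rw [finsum_mem_congr rfl fun u hu =>
      (hG.ncard_childSet hdeg (by rintro rfl; simp at hu)).trans (mul_one d).symm,
      ← mul_finsum_mem, finsum_one, ih]
    ring

lemma IsTree.ncard_setOf_dist_le (v : V) (n : ℕ) :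
    {w | G.dist v w ≤ n}.ncard = 1 + ∑ k ∈ Finset.range n, (d + 1) * d ^ k := by
  induction n with
  | zero => simp only [Nat.le_zero, hG.connected.setOf_dist_eq_zero]; simp
  | succ n ih =>
    have hB : {w | G.dist v w ≤ n + 1} = {w | G.dist v w ≤ n} ∪ {w | G.dist v w = n + 1} := by
      ext; simp only [Set.mem_union, Set.mem_ofPred_eq]; omega
    have hfin : {w | G.dist v w ≤ n}.Finite :=
      ((Set.finite_Iic n).biUnion fun k _ => hG.finite_setOf_dist_eq hdeg v k).subset
        fun w hw => Set.mem_biUnion (x := G.dist v w) hw rfl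
    rw [hB, Set.ncard_union_eq _ hfin (hG.finite_setOf_dist_eq hdeg v _), ih,
      hG.ncard_setOf_dist_eq_add_one hdeg, Finset.sum_range_succ, add_assoc]
    exact Set.disjoint_left.mpr fun w h₁ h₂ => by simp only [Set.mem_ofPred_eq] at h₁ h₂; omega

end RegularTree

end SimpleGraph

lemma exists_lt_lt_of_ncard_eq_three {α : Type*} [LinearOrder α] {s : Set α} (h : s.ncard = 3) :
    ∃ x y z, x < y ∧ y < z ∧ s = {x, y, z} := by
  obtain ⟨x, y, z, hxy, hxz, hyz, rfl⟩ := Set.ncard_eq_three.mp h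
  rcases hxy.lt_or_gt with h₁ | h₁ <;> rcases hxz.lt_or_gt with h₂ | h₂ <;>
    rcases hyz.lt_or_gt with h₃ | h₃
  all_goals first
    | exact absurd (h₁.trans h₃) h₂.not_gt
    | exact absurd (h₃.trans h₁) h₂.not_gt
    | exact ⟨x, y, z, h₁, h₃, rfl⟩
    | exact ⟨x, z, y, h₂, h₃, by ext; simp; tauto⟩
    | exact ⟨z, x, y, h₂, h₁, by ext; simp; tauto⟩
    | exact ⟨y, x, z, h₁, h₂, by ext; simp; tauto⟩
    | exact ⟨y, z, x, h₃, h₂, by ext; simp; tauto⟩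
    | exact ⟨z, y, x, h₃, h₁, by ext; simp; tauto⟩

lemma eq_of_insert_eq_insert {α : Type*} [LinearOrder α] {x y z x' y' z' : α}
    (h₁ : x < y) (h₂ : y < z) (h₁' : x' < y') (h₂' : y' < z')
    (h : ({x, y, z} : Set α) = {x', y', z'}) : x = x' ∧ y = y' ∧ z = z' := by
  have ends : ∀ {a b c : α}, a < b → b < c → IsLeast {a, b, c} a ∧ IsGreatest {a, b, c} c :=
    fun _ _ => ⟨⟨by simp, by rintro t (rfl | rfl | rfl) <;> order⟩,
      ⟨by simp, by rintro t (rfl | rfl | rfl) <;> order⟩⟩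
  obtain ⟨hmin, hmax⟩ := ends h₁ h₂
  rw [h] at hmin hmax
  obtain rfl := hmin.unique (ends h₁' h₂').1
  obtain rfl := hmax.unique (ends h₁' h₂').2
  have hy : y ∈ ({x, y', z} : Set α) := h ▸ by simp
  simp only [Set.mem_insert_iff, Set.mem_singleton_iff] at hy
  refine ⟨rfl, ?_, rfl⟩
  rcases hy with hy | hy | hy <;> first | exact hy | order

@[simp] lemma fnum_top : fnum ⊤ = 1 := rfl
@[simp] lemma fden_top : fden ⊤ = 0 := rfl
@[simp] lemma fnum_coe (q : ℚ) : fnum q = q.num := rfl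
@[simp] lemma fden_coe (q : ℚ) : fden q = q.den := rfl

lemma fden_nonneg (x : QInf) : 0 ≤ fden x := by
  induction x using WithTop.recTopCoe <;> simp

lemma fden_pos {x : QInf} (hx : x ≠ ⊤) : 0 < fden x := by
  lift x to ℚ using hx
  simpa using x.pos

lemma fnum_fmk {a b : ℤ} (hab : IsCoprime a b) (hb : 0 < b) : fnum (fmk a b) = a := by
  rw [fmk, if_neg hb.ne', fnum_coe]
  exact Rat.num_div_eq_of_coprime hb (Int.isCoprime_iff_gcd_eq_one.mp hab)

lemma fden_fmk {a b : ℤ} (hab : IsCoprime a b) (hb : 0 < b) : fden (fmk a b) = b := by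
  rw [fmk, if_neg hb.ne', fden_coe]
  exact Rat.den_div_eq_of_coprime hb (Int.isCoprime_iff_gcd_eq_one.mp hab)

lemma fmk_fnum_fden (x : QInf) : fmk (fnum x) (fden x) = x := by
  induction x using WithTop.recTopCoe with
  | top => simp [fmk]
  | coe q => simp [fmk, q.den_nz, Rat.num_div_den]

lemma fmk_neg_neg (a b : ℤ) : fmk (-a) (-b) = fmk a b := by
  simp [fmk, neg_div_neg_eq]

lemma lt_iff_fnum_mul_fden_lt {x y : QInf} : x < y ↔ fnum x * fden y < fnum y * fden x := by
  induction x using WithTop.recTopCoe with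
  | top => simpa using fden_nonneg y
  | coe p =>
    induction y using WithTop.recTopCoe with
    | top => simpa using p.pos
    | coe q => simpa using Rat.lt_iff p q

lemma fareyNbr_comm {x y : QInf} : FareyNbr x y ↔ FareyNbr y x := by
  simp only [FareyNbr, fdist, abs_sub_comm]

lemma fareyNbr_of_det {x y : QInf} (h : fnum y * fden x - fnum x * fden y = 1) :
    FareyNbr x y := by
  rw [FareyNbr, fdist, ← neg_sub, h, abs_neg, abs_one]

lemma FareyNbr.det_eq_one {x y : QInf} (h : FareyNbr x y) (hxy : x < y) :
    fnum y * fden x - fnum x * fden y = 1 := by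
  rw [lt_iff_fnum_mul_fden_lt] at hxy
  rcases abs_eq zero_le_one |>.mp h with h | h <;> linarith

/-- `a/b < c/d` in lowest terms with `c b - a d = 1`; `d = 0` encodes `c/d = ∞`. -/
structure FareyCoords (a b c d : ℤ) : Prop where
  left_den_pos : 0 < b
  right_den_nonneg : 0 ≤ d
  det_eq_one : c * b - a * d = 1

def mediantTriple (a b c d : ℤ) : Set QInf := {fmk a b, fmk (a + c) (b + d), fmk c d}

/-- The mutation of `mediantTriple a b c d` in the direction of its mediant, written as a
`mediantTriple` again. -/
def flipTriple (a b c d : ℤ) : Set QInf :=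
  if b ≤ d then mediantTriple a b (c - a) (d - b) else mediantTriple (a - c) (b - d) c d

namespace FareyCoords

variable {a b c d : ℤ} (h : FareyCoords a b c d)
include h

lemma right_ne_zero : c ≠ 0 ∨ d ≠ 0 := by
  by_contra! hcd
  simpa [hcd] using h.det_eq_one

lemma mediant_den_pos : 0 < b + d := by
  linarith [h.left_den_pos, h.right_den_nonneg]

lemma fnum_left : fnum (fmk a b) = a :=
  fnum_fmk ⟨-d, c, by linear_combination h.det_eq_one⟩ h.left_den_pos

lemma fden_left : fden (fmk a b) = b :=
  fden_fmk ⟨-d, c, by linear_combination h.det_eq_one⟩ h.left_den_pos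

lemma fnum_mediant : fnum (fmk (a + c) (b + d)) = a + c :=
  fnum_fmk ⟨-d, c, by linear_combination h.det_eq_one⟩ h.mediant_den_pos

lemma fden_mediant : fden (fmk (a + c) (b + d)) = b + d :=
  fden_fmk ⟨-d, c, by linear_combination h.det_eq_one⟩ h.mediant_den_pos

lemma fnum_right : fnum (fmk c d) = c := by
  rcases h.right_den_nonneg.lt_or_eq with hd | rfl
  · exact fnum_fmk ⟨b, -a, by linear_combination h.det_eq_one⟩ hd
  · have hcb : c * b = 1 := by simpa using h.det_eq_one
    simp only [fmk, if_pos, fnum_top]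
    nlinarith [h.left_den_pos]

lemma fden_right : fden (fmk c d) = d := by
  rcases h.right_den_nonneg.lt_or_eq with hd | rfl
  · exact fden_fmk ⟨b, -a, by linear_combination h.det_eq_one⟩ hd
  · simp [fmk]

lemma left_lt_mediant : fmk a b < fmk (a + c) (b + d) := by
  rw [lt_iff_fnum_mul_fden_lt, h.fnum_left, h.fden_left, h.fnum_mediant, h.fden_mediant]
  linarith [h.det_eq_one]

lemma mediant_lt_right : fmk (a + c) (b + d) < fmk c d := by
  rw [lt_iff_fnum_mul_fden_lt, h.fnum_right, h.fden_right, h.fnum_mediant, h.fden_mediant]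
  linarith [h.det_eq_one]

lemma isFareyTriple : IsFareyTriple (mediantTriple a b c d) := by
  have hlm := h.left_lt_mediant
  have hmr := h.mediant_lt_right
  have nlm : FareyNbr (fmk a b) (fmk (a + c) (b + d)) := fareyNbr_of_det <| by
    rw [h.fnum_left, h.fden_left, h.fnum_mediant, h.fden_mediant]
    linear_combination h.det_eq_one
  have nmr : FareyNbr (fmk (a + c) (b + d)) (fmk c d) := fareyNbr_of_det <| by
    rw [h.fnum_right, h.fden_right, h.fnum_mediant, h.fden_mediant]
    linear_combination h.det_eq_one
  have nlr : FareyNbr (fmk a b) (fmk c d) := fareyNbr_of_det <| by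
    rw [h.fnum_left, h.fden_left, h.fnum_right, h.fden_right]
    exact h.det_eq_one
  refine ⟨Set.ncard_eq_three.mpr ⟨_, _, _, hlm.ne, (hlm.trans hmr).ne, hmr.ne, rfl⟩, ?_⟩
  simp only [mediantTriple, Set.pairwise_insert, Set.pairwise_singleton, Set.mem_insert_iff,
    Set.mem_singleton_iff]
  grind [fareyNbr_comm]

lemma eq_of_mediantTriple_eq {a' b' c' d' : ℤ} (h' : FareyCoords a' b' c' d')
    (e : mediantTriple a b c d = mediantTriple a' b' c' d') :
    a = a' ∧ b = b' ∧ c = c' ∧ d = d' := by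
  obtain ⟨e₁, -, e₃⟩ := eq_of_insert_eq_insert h.left_lt_mediant h.mediant_lt_right
    h'.left_lt_mediant h'.mediant_lt_right e
  refine ⟨?_, ?_, ?_, ?_⟩
  · rw [← h.fnum_left, e₁, h'.fnum_left]
  · rw [← h.fden_left, e₁, h'.fden_left]
  · rw [← h.fnum_right, e₃, h'.fnum_right]
  · rw [← h.fden_right, e₃, h'.fden_right]

lemma mut_left : FareyCoords (a + c) (b + d) c d :=
  ⟨h.mediant_den_pos, h.right_den_nonneg, by linear_combination h.det_eq_one⟩

lemma mut_right : FareyCoords a b (a + c) (b + d) :=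
  ⟨h.left_den_pos, h.mediant_den_pos.le, by linear_combination h.det_eq_one⟩

lemma mut_mediant_of_le (hbd : b ≤ d) : FareyCoords a b (c - a) (d - b) :=
  ⟨h.left_den_pos, by linarith, by linear_combination h.det_eq_one⟩

lemma mut_mediant_of_lt (hdb : d < b) : FareyCoords (a - c) (b - d) c d :=
  ⟨by linarith, h.right_den_nonneg, by linear_combination h.det_eq_one⟩

lemma isFareyTriple_flipTriple : IsFareyTriple (flipTriple a b c d) := by
  unfold flipTriple
  split_ifs with hbd
  exacts [(h.mut_mediant_of_le hbd).isFareyTriple,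
    (h.mut_mediant_of_lt (not_le.mp hbd)).isFareyTriple]

end FareyCoords

lemma IsFareyTriple.exists_fareyCoords {s : Set QInf} (hs : IsFareyTriple s) :
    ∃ a b c d, FareyCoords a b c d ∧ s = mediantTriple a b c d := by
  obtain ⟨x, y, z, hxy, hyz, rfl⟩ := exists_lt_lt_of_ncard_eq_three hs.1
  have det : ∀ {p q}, p ∈ ({x, y, z} : Set QInf) → q ∈ ({x, y, z} : Set QInf) → p < q →
      fnum q * fden p - fnum p * fden q = 1 := fun hp hq hpq =>
    (hs.2 hp hq hpq.ne).det_eq_one hpq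
  have dxy := det (by simp) (by simp) hxy
  have dyz := det (by simp) (by simp) hyz
  have dxz := det (by simp) (by simp) (hxy.trans hyz)
  -- Cramer's rule for the middle point, whose determinants with both ends are `1`
  have hfy : fden y = fden x + fden z := by
    linear_combination fden z * dxy + fden x * dyz - fden y * dxz
  have hny : fnum y = fnum x + fnum z := by
    linear_combination fnum z * dxy + fnum x * dyz - fnum y * dxz
  refine ⟨fnum x, fden x, fnum z, fden z,
    ⟨fden_pos (hxy.trans_le le_top).ne, fden_nonneg z, dxz⟩, ?_⟩
  rw [mediantTriple, ← hny, ← hfy, fmk_fnum_fden, fmk_fnum_fden, fmk_fnum_fden]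

lemma fareyMut_comm (p q r : QInf) : fareyMut p q r = fareyMut p r q := by
  have hsum : fsum q r = fsum r q := by simp only [fsum, add_comm]
  have hdiff : fdiff q r = fdiff r q := by
    rw [fdiff, fdiff, ← fmk_neg_neg]
    simp only [neg_sub]
  rw [fareyMut, fareyMut, fareyMutEl, fareyMutEl, if_congr or_comm hdiff hsum, Set.pair_comm]

lemma fareyMut_congr {p q r q' r' : QInf} (hpq : p ≠ q) (hpr : p ≠ r) (hqr : q ≠ r)
    (h : ({p, q, r} : Set QInf) = {p, q', r'}) : fareyMut p q r = fareyMut p q' r' := by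
  have hq : q ∈ ({p, q', r'} : Set QInf) := h ▸ by simp
  have hr : r ∈ ({p, q', r'} : Set QInf) := h ▸ by simp
  simp only [Set.mem_insert_iff, Set.mem_singleton_iff] at hq hr
  rcases hq with rfl | rfl | rfl <;> rcases hr with rfl | rfl | rfl
  all_goals first | rfl | exact fareyMut_comm _ _ _ | contradiction

namespace FareyCoords

variable {a b c d : ℤ} (h : FareyCoords a b c d)
include h

lemma fareyMut_left :
    fareyMut (fmk a b) (fmk (a + c) (b + d)) (fmk c d) = mediantTriple (a + c) (b + d) c d := by
  have hlm := h.left_lt_mediant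
  have hlr := hlm.trans h.mediant_lt_right
  rw [fareyMut, fareyMutEl, if_neg (by rintro (⟨h₁, h₂⟩ | ⟨h₁, h₂⟩) <;> order), fsum,
    h.fnum_mediant, h.fden_mediant, h.fnum_right, h.fden_right, mediantTriple, Set.insert_comm]

lemma fareyMut_right :
    fareyMut (fmk c d) (fmk a b) (fmk (a + c) (b + d)) = mediantTriple a b (a + c) (b + d) := by
  have hmr := h.mediant_lt_right
  have hlr := h.left_lt_mediant.trans hmr
  rw [fareyMut, fareyMutEl, if_neg (by rintro (⟨h₁, h₂⟩ | ⟨h₁, h₂⟩) <;> order), fsum,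
    h.fnum_mediant, h.fden_mediant, h.fnum_left, h.fden_left, mediantTriple, Set.insert_comm,
    Set.pair_comm]

lemma fareyMut_mediant :
    fareyMut (fmk (a + c) (b + d)) (fmk a b) (fmk c d) = flipTriple a b c d := by
  rw [fareyMut, fareyMutEl, if_pos (Or.inl ⟨h.left_lt_mediant, h.mediant_lt_right⟩), fdiff,
    h.fnum_left, h.fden_left, h.fnum_right, h.fden_right, flipTriple]
  split_ifs
  · rw [mediantTriple, ← fmk_neg_neg, add_sub_cancel, add_sub_cancel, Set.insert_comm,
      Set.pair_comm]
    simp only [neg_sub]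
  · rw [mediantTriple, sub_add_cancel, sub_add_cancel]

lemma isMutationOf_iff {t : Set QInf} : IsMutationOf (mediantTriple a b c d) t ↔
    t = mediantTriple (a + c) (b + d) c d ∨ t = mediantTriple a b (a + c) (b + d) ∨
      t = flipTriple a b c d := by
  have hlm := h.left_lt_mediant
  have hmr := h.mediant_lt_right
  constructor
  · rintro ⟨x, y, z, hxy, hxz, hyz, hs, rfl⟩
    have hx : x ∈ mediantTriple a b c d := hs ▸ by simp
    simp only [mediantTriple, Set.mem_insert_iff, Set.mem_singleton_iff] at hx hs
    rcases hx with rfl | rfl | rfl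
    · exact Or.inl (h.fareyMut_left ▸ fareyMut_congr hxy hxz hyz hs.symm)
    · refine Or.inr (Or.inr (h.fareyMut_mediant ▸ fareyMut_congr hxy hxz hyz ?_))
      rw [← hs, Set.insert_comm]
    · refine Or.inr (Or.inl (h.fareyMut_right ▸ fareyMut_congr hxy hxz hyz ?_))
      rw [← hs]
      ext
      simp only [Set.mem_insert_iff, Set.mem_singleton_iff]
      tauto
  · rintro (rfl | rfl | rfl)
    · exact ⟨_, _, _, hlm.ne, (hlm.trans hmr).ne, hmr.ne, rfl, h.fareyMut_left.symm⟩
    · refine ⟨_, _, _, (hlm.trans hmr).ne', hmr.ne', hlm.ne, ?_, h.fareyMut_right.symm⟩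
      ext
      simp only [mediantTriple, Set.mem_insert_iff, Set.mem_singleton_iff]
      tauto
    · refine ⟨_, _, _, hlm.ne', hmr.ne, (hlm.trans hmr).ne, ?_, h.fareyMut_mediant.symm⟩
      rw [mediantTriple, Set.insert_comm]

lemma nodup_neighbors : [mediantTriple a b c d, mediantTriple (a + c) (b + d) c d,
    mediantTriple a b (a + c) (b + d), flipTriple a b c d].Nodup := by
  have hb := h.left_den_pos
  have hcd := h.right_ne_zero
  have h₁ := h.mut_left
  have h₃ := h.mut_right
  unfold flipTriple
  split_ifs with hbd <;>
    [have h₂ := h.mut_mediant_of_le hbd; have h₂ := h.mut_mediant_of_lt (not_le.mp hbd)] <;>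
    simp only [List.nodup_cons, List.mem_cons, List.not_mem_nil, or_false, not_or,
      List.nodup_nil, not_false_eq_true, and_true] <;>
    refine ⟨⟨?_, ?_, ?_⟩, ⟨?_, ?_⟩, ?_⟩ <;> intro e <;>
    have := eq_of_mediantTriple_eq (by assumption) (by assumption) e <;> omega

end FareyCoords

lemma IsMutationOf.symm {s t : Set QInf} (hs : IsFareyTriple s) (hst : IsMutationOf s t) :
    IsMutationOf t s := by
  obtain ⟨a, b, c, d, h, rfl⟩ := hs.exists_fareyCoords
  rcases h.isMutationOf_iff.mp hst with rfl | rfl | rfl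
  · refine h.mut_left.isMutationOf_iff.mpr (Or.inr (Or.inr ?_))
    rw [flipTriple, if_neg (by linarith [h.left_den_pos])]
    congr 1 <;> ring
  · refine h.mut_right.isMutationOf_iff.mpr (Or.inr (Or.inr ?_))
    rw [flipTriple, if_pos (by linarith [h.right_den_nonneg])]
    congr 1 <;> ring
  · unfold flipTriple
    split_ifs with hbd
    · refine (h.mut_mediant_of_le hbd).isMutationOf_iff.mpr (Or.inr (Or.inl ?_))
      congr 1 <;> ring
    · refine (h.mut_mediant_of_lt (not_le.mp hbd)).isMutationOf_iff.mpr (Or.inl ?_)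
      congr 1 <;> ring

lemma fareyExchangeGraph_adj_iff {s t : {s : Set QInf // IsFareyTriple s}} :
    fareyExchangeGraph.Adj s t ↔ s ≠ t ∧ IsMutationOf s.1 t.1 :=
  ⟨fun ⟨hne, hst⟩ => ⟨hne, hst.elim id (·.symm t.2)⟩, fun ⟨hne, hst⟩ => ⟨hne, Or.inl hst⟩⟩

/-- The norm of the Eisenstein integer `a + b ω`. -/
def eisensteinNorm (a b : ℤ) : ℤ := a ^ 2 - a * b + b ^ 2

def height (x : QInf) : ℤ := eisensteinNorm (fnum x) (fden x)

noncomputable def potential (s : Set QInf) : ℤ := ∑ᶠ x ∈ s, height x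

lemma eisensteinNorm_pos {a b : ℤ} (h : a ≠ 0 ∨ b ≠ 0) : 0 < eisensteinNorm a b := by
  unfold eisensteinNorm
  rcases h with h | h
  · nlinarith [sq_nonneg (2 * b - a), sq_pos_of_ne_zero h]
  · nlinarith [sq_nonneg (2 * a - b), sq_pos_of_ne_zero h]

lemma potential_insert_insert_singleton {x y z : QInf} (hxy : x ≠ y) (hxz : x ≠ z)
    (hyz : y ≠ z) : potential {x, y, z} = height x + height y + height z := by
  rw [potential, finsum_mem_insert _ (by simp [hxy, hxz]) (Set.toFinite _), finsum_mem_pair hyz,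
    add_assoc]

theorem eq_one_of_sq_add_sq_add_sq_sub {x y z : ℤ}
    (h : x ^ 2 + y ^ 2 + z ^ 2 - 2 * (x * y + y * z + z * x) = -3)
    (hx : x ≤ y + z) (hy : y ≤ x + z) (hz : z ≤ x + y) : x = 1 ∧ y = 1 ∧ z = 1 := by
  -- `p = y + z - x`, `q = x + z - y`, `r = x + y - z` are odd, as `p ^ 2 + 3 = 4 y z` etc.,
  -- hence positive, while `p q + q r + r p = 3`.
  have ne_zero : ∀ {t m n : ℤ}, t ^ 2 + 3 = 4 * (m * n) → t ≠ 0 := by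
    rintro t m n h rfl
    omega
  have hp := ne_zero (t := y + z - x) (m := y) (n := z) (by linear_combination h)
  have hq := ne_zero (t := x + z - y) (m := x) (n := z) (by linear_combination h)
  have hr := ne_zero (t := x + y - z) (m := x) (n := y) (by linear_combination h)
  have hpq := mul_le_mul_of_nonneg_left (show 1 ≤ x + z - y by omega) (show 0 ≤ y + z - x by omega)
  have hqr := mul_le_mul_of_nonneg_left (show 1 ≤ x + y - z by omega) (show 0 ≤ x + z - y by omega)
  have hrp := mul_le_mul_of_nonneg_left (show 1 ≤ y + z - x by omega) (show 0 ≤ x + y - z by omega)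
  have : (y + z - x) * (x + z - y) + (x + z - y) * (x + y - z) + (x + y - z) * (y + z - x) = 3 := by
    linear_combination -h
  omega

namespace FareyCoords

variable {a b c d : ℤ} (h : FareyCoords a b c d)
include h

lemma eisensteinNorm_pos : 0 < eisensteinNorm a b ∧ 0 < eisensteinNorm c d ∧
    0 < eisensteinNorm (a + c) (b + d) :=
  ⟨_root_.eisensteinNorm_pos (Or.inr h.left_den_pos.ne'),
    _root_.eisensteinNorm_pos h.right_ne_zero,
    _root_.eisensteinNorm_pos (Or.inr h.mediant_den_pos.ne')⟩

lemma potential_eq : potential (mediantTriple a b c d) =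
    eisensteinNorm a b + eisensteinNorm (a + c) (b + d) + eisensteinNorm c d := by
  have hlm := h.left_lt_mediant
  have hmr := h.mediant_lt_right
  rw [mediantTriple, potential_insert_insert_singleton hlm.ne (hlm.trans hmr).ne hmr.ne, height,
    height, height, h.fnum_left, h.fden_left, h.fnum_mediant, h.fden_mediant, h.fnum_right,
    h.fden_right]

lemma potential_pos : 0 < potential (mediantTriple a b c d) := by
  obtain ⟨hu, hv, hw⟩ := h.eisensteinNorm_pos
  rw [h.potential_eq]
  omega

lemma sq_add_sq_add_sq_sub : eisensteinNorm a b ^ 2 + eisensteinNorm c d ^ 2 +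
    eisensteinNorm (a + c) (b + d) ^ 2 - 2 * (eisensteinNorm a b * eisensteinNorm c d +
      eisensteinNorm c d * eisensteinNorm (a + c) (b + d) +
      eisensteinNorm (a + c) (b + d) * eisensteinNorm a b) = -3 := by
  have := h.det_eq_one
  unfold eisensteinNorm
  linear_combination (-3 * (c * b - a * d) - 3) * this

lemma potential_mut_left : potential (mediantTriple (a + c) (b + d) c d) =
    potential (mediantTriple a b c d) +
      2 * (eisensteinNorm (a + c) (b + d) + eisensteinNorm c d - eisensteinNorm a b) := by
  rw [h.mut_left.potential_eq, h.potential_eq]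
  unfold eisensteinNorm
  ring

lemma potential_mut_right : potential (mediantTriple a b (a + c) (b + d)) =
    potential (mediantTriple a b c d) +
      2 * (eisensteinNorm a b + eisensteinNorm (a + c) (b + d) - eisensteinNorm c d) := by
  rw [h.mut_right.potential_eq, h.potential_eq]
  unfold eisensteinNorm
  ring

lemma potential_flipTriple : potential (flipTriple a b c d) =
    potential (mediantTriple a b c d) +
      2 * (eisensteinNorm a b + eisensteinNorm c d - eisensteinNorm (a + c) (b + d)) := by
  unfold flipTriple
  split_ifs with hbd
  · rw [(h.mut_mediant_of_le hbd).potential_eq, h.potential_eq]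
    unfold eisensteinNorm
    ring
  · rw [(h.mut_mediant_of_lt (not_le.mp hbd)).potential_eq, h.potential_eq]
    unfold eisensteinNorm
    ring

lemma eq_of_eisensteinNorm_eq_one (hl : eisensteinNorm a b = 1)
    (hm : eisensteinNorm (a + c) (b + d) = 1) : a = 0 ∧ b = 1 ∧ c = 1 ∧ d = 0 := by
  have hb := h.left_den_pos
  have hd := h.right_den_nonneg
  have hdet := h.det_eq_one
  unfold eisensteinNorm at hl hm
  obtain rfl : b = 1 := by nlinarith [sq_nonneg (2 * a - b)]
  obtain rfl : d = 0 := by nlinarith [sq_nonneg (2 * (a + c) - (1 + d))]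
  obtain rfl : c = 1 := by linarith
  exact ⟨by nlinarith, rfl, rfl, rfl⟩

lemma fareyExchangeGraph_adj_iff {t : {s : Set QInf // IsFareyTriple s}} :
    fareyExchangeGraph.Adj ⟨mediantTriple a b c d, h.isFareyTriple⟩ t ↔
      t.1 = mediantTriple (a + c) (b + d) c d ∨ t.1 = mediantTriple a b (a + c) (b + d) ∨
        t.1 = flipTriple a b c d := by
  rw [_root_.fareyExchangeGraph_adj_iff, h.isMutationOf_iff, and_iff_right_iff_imp]
  have := h.nodup_neighbors
  simp only [List.nodup_cons, List.mem_cons, List.not_mem_nil, or_false, not_or] at this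
  rintro (e | e | e) rfl <;> tauto

lemma ncard_neighborSet :
    (fareyExchangeGraph.neighborSet ⟨mediantTriple a b c d, h.isFareyTriple⟩).ncard = 3 := by
  have := h.nodup_neighbors
  simp only [List.nodup_cons, List.mem_cons, List.not_mem_nil, or_false, not_or] at this
  refine Set.ncard_eq_three.mpr ⟨⟨_, h.mut_left.isFareyTriple⟩, ⟨_, h.mut_right.isFareyTriple⟩,
    ⟨_, h.isFareyTriple_flipTriple⟩, ?_, ?_, ?_, ?_⟩
  · exact fun e => this.2.1.1 (congrArg Subtype.val e)
  · exact fun e => this.2.1.2 (congrArg Subtype.val e)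
  · exact fun e => this.2.2.1 (congrArg Subtype.val e)
  · ext t
    simp only [SimpleGraph.mem_neighborSet, h.fareyExchangeGraph_adj_iff, Set.mem_insert_iff,
      Set.mem_singleton_iff, Subtype.ext_iff]

lemma eq_of_adj_of_potential_le {t₁ t₂ : {s : Set QInf // IsFareyTriple s}}
    (h₁ : fareyExchangeGraph.Adj ⟨mediantTriple a b c d, h.isFareyTriple⟩ t₁)
    (h₂ : fareyExchangeGraph.Adj ⟨mediantTriple a b c d, h.isFareyTriple⟩ t₂)
    (hp₁ : potential t₁.1 ≤ potential (mediantTriple a b c d))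
    (hp₂ : potential t₂.1 ≤ potential (mediantTriple a b c d)) : t₁ = t₂ := by
  obtain ⟨hu, hv, hw⟩ := h.eisensteinNorm_pos
  have := h.potential_mut_left
  have := h.potential_mut_right
  have := h.potential_flipTriple
  rcases h.fareyExchangeGraph_adj_iff.mp h₁ with e₁ | e₁ | e₁ <;>
    rcases h.fareyExchangeGraph_adj_iff.mp h₂ with e₂ | e₂ | e₂ <;>
    first | exact Subtype.ext (e₁.trans e₂.symm) | (rw [e₁] at hp₁; rw [e₂] at hp₂; omega)

lemma exists_adj_potential_lt (hne : ¬ (a = 0 ∧ b = 1 ∧ c = 1 ∧ d = 0)) :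
    ∃ t, fareyExchangeGraph.Adj ⟨mediantTriple a b c d, h.isFareyTriple⟩ t ∧
      potential t.1 < potential (mediantTriple a b c d) := by
  by_contra! hmin
  have h₁ := hmin ⟨_, h.mut_left.isFareyTriple⟩ (h.fareyExchangeGraph_adj_iff.mpr (Or.inl rfl))
  have h₃ := hmin ⟨_, h.mut_right.isFareyTriple⟩
    (h.fareyExchangeGraph_adj_iff.mpr (Or.inr (Or.inl rfl)))
  have h₂ := hmin ⟨_, h.isFareyTriple_flipTriple⟩
    (h.fareyExchangeGraph_adj_iff.mpr (Or.inr (Or.inr rfl)))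
  rw [h.potential_mut_left] at h₁
  rw [h.potential_mut_right] at h₃
  rw [h.potential_flipTriple] at h₂
  obtain ⟨hl, -, hm⟩ := eq_one_of_sq_add_sq_add_sq_sub h.sq_add_sq_add_sq_sub
    (by linarith) (by linarith) (by linarith)
  exact hne (h.eq_of_eisensteinNorm_eq_one hl hm)

end FareyCoords

lemma fareyCoords_zero_one_one_zero : FareyCoords 0 1 1 0 := ⟨one_pos, le_rfl, by norm_num⟩

theorem fareyExchangeGraph_connected : fareyExchangeGraph.Connected := by
  refine SimpleGraph.connected_of_exists_adj_lt (fun s => (potential s.1).toNat)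
    ⟨_, fareyCoords_zero_one_one_zero.isFareyTriple⟩ fun ⟨s, hs⟩ hne => ?_
  obtain ⟨a, b, c, d, h, rfl⟩ := hs.exists_fareyCoords
  obtain ⟨t, hst, hlt⟩ := h.exists_adj_potential_lt fun ⟨ha, hb, hc, hd⟩ => by
    subst ha hb hc hd
    exact hne rfl
  exact ⟨t, hst, (Int.toNat_lt_toNat h.potential_pos).mpr hlt⟩

theorem fareyExchangeGraph_isAcyclic : fareyExchangeGraph.IsAcyclic :=
  SimpleGraph.isAcyclic_of_adj_le_unique (fun s => potential s.1)
    fun ⟨_, hs⟩ _ _ h₁ h₂ hp₁ hp₂ => by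
      obtain ⟨a, b, c, d, h, rfl⟩ := hs.exists_fareyCoords
      exact h.eq_of_adj_of_potential_le h₁ h₂ hp₁ hp₂

theorem fareyExchangeGraph_ncard_neighborSet (s : {s : Set QInf // IsFareyTriple s}) :
    (fareyExchangeGraph.neighborSet s).ncard = 3 := by
  obtain ⟨s, hs⟩ := s
  obtain ⟨a, b, c, d, h, rfl⟩ := hs.exists_fareyCoords
  exact h.ncard_neighborSet

/-- The exchange graph of Farey triples is a 3-regular tree: it is connected,
acyclic, and every vertex has exactly three neighbours.  In particular, for every
Farey triple `v` and every `n : ℕ`, the number of Farey triples obtainable from `v`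
by a sequence of at most `n` mutations equals `3 * 2 ^ n - 2`. -/
theorem fareyExchangeGraph_threeRegularTree :
    fareyExchangeGraph.Connected ∧ fareyExchangeGraph.IsAcyclic ∧
    (∀ v, (fareyExchangeGraph.neighborSet v).ncard = 3) ∧
    (∀ (v : {s : Set QInf // IsFareyTriple s}) (n : ℕ),
      {w | ∃ p : fareyExchangeGraph.Walk v w, p.length ≤ n}.ncard = 3 * 2 ^ n - 2) := by
  have htree : fareyExchangeGraph.IsTree :=
    ⟨fareyExchangeGraph_connected, fareyExchangeGraph_isAcyclic⟩
  refine ⟨htree.1, htree.2, fareyExchangeGraph_ncard_neighborSet, fun v n => ?_⟩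
  simp_rw [htree.1.exists_walk_length_le_iff]
  rw [htree.ncard_setOf_dist_le (d := 2) fareyExchangeGraph_ncard_neighborSet v n,
    ← Finset.mul_sum, Nat.geomSum_eq le_rfl]
  have := n.one_le_two_pow
  omega
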